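/- In the full subcategory Haus of Top consisting of all Hausdorff spaces, a Hausdorff space X is finitely generated with respect to open embeddings if and only if X is compact. The same characterization holds in the full subcategories Top₁ of T₁-spaces and Top₀ of T₀-spaces. -/

import Mathlib

/-!
In a directed colimit of open embeddings the colimit injections are themselves open embeddings.
Their ranges therefore form a directed open cover of the colimit, so the compact image of a
compact space lies in one of them and the map factors through that stage, uniquely because the
injections are injective. Conversely, a space is the directed colimit of the finite unions of the
members of any open cover, and factoring the identity through one stage gives a finite subcover.
Being Hausdorff, T₁ or T₀ passes to open subspaces and to such colimits, since any two points of
the colimit lie in one stage, which is an open subspace.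
-/

open CategoryTheory CategoryTheory.Limits

universe u

/-- For a full subcategory of `Top` given by a property `P` of spaces, an object `X` is
finitely generated with respect to open embeddings if for every diagram in the subcategory
indexed by a directed poset (every finite subset has an upper bound), whose connecting maps
are open embeddings, with colimit cocone `c` in the subcategory, every morphism
`f : X ⟶ c.pt` factors through some colimit injection, essentially uniquely (any two
factorizations through the same stage are merged by a connecting map). -/
def TopCat.FinGenWrtOpenEmbeddingsIn (P : TopCat.{u} → Prop)
    (X : ObjectProperty.FullSubcategory P) : Prop :=
  ∀ (I : Type u) [PartialOrder I] [Nonempty I] [IsDirected I (· ≤ ·)]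
    (F : I ⥤ ObjectProperty.FullSubcategory P),
    (∀ {i j : I} (f : i ⟶ j),
      Topology.IsOpenEmbedding ((ObjectProperty.ι P).map (F.map f))) →
    ∀ (c : Cocone F), IsColimit c →
      ∀ f : X ⟶ c.pt,
        (∃ (i : I) (g : X ⟶ F.obj i), g ≫ c.ι.app i = f) ∧
        (∀ (i : I) (g g' : X ⟶ F.obj i), g ≫ c.ι.app i = f → g' ≫ c.ι.app i = f →
          ∃ (j : I) (h : i ≤ j), g ≫ F.map (homOfLE h) = g' ≫ F.map (homOfLE h))

open Topology TopologicalSpace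

theorem compactSpace_of_monotone_isOpenCover {X : Type u} [TopologicalSpace X]
    (h : ∀ (D : Type u) [PartialOrder D] [Nonempty D] [IsDirected D (· ≤ ·)]
      (V : D → Opens X), Monotone V → IsOpenCover V → ∃ d, V d = ⊤) :
    CompactSpace X := by
  refine ⟨isCompact_of_finite_subcover fun U hU hUcov => ?_⟩
  classical
  let V : Finset _ → Opens X := fun t => ⟨⋃ i ∈ t, U i, isOpen_biUnion fun i _ => hU i⟩
  have hV : Monotone V := fun t t' htt' => Set.biUnion_subset_biUnion_left htt'
  have hcov : IsOpenCover V := eq_top_iff.2 fun x _ => by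
    obtain ⟨i, hi⟩ := Set.mem_iUnion.1 (hUcov (Set.mem_univ x))
    exact Opens.mem_iSup.2 ⟨{i}, by simpa [V] using hi⟩
  obtain ⟨t, ht⟩ := h _ V hV hcov
  exact ⟨t, fun x _ => by simpa [V] using congrArg (x ∈ ·) ht⟩

namespace TopCat

section DirectedColimit

variable {I : Type u} [Preorder I] [IsDirected I (· ≤ ·)] {G : I ⥤ TopCat.{u}}
  (hG : ∀ {i j : I} (f : i ⟶ j), IsOpenEmbedding (G.map f)) {c : Cocone G} (hc : IsColimit c)

include hc

theorem jointly_surjective_of_isColimit₂ (x y : c.pt) :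
    ∃ (k : I) (a b : G.obj k), c.ι.app k a = x ∧ c.ι.app k b = y :=
  Types.FilteredColimit.jointly_surjective_of_isColimit₂
    (isColimitOfPreserves (forget TopCat) hc) x y

include hG

theorem injective_ι_of_isOpenEmbedding_map (i : I) : Function.Injective (c.ι.app i) := by
  intro x y hxy
  obtain ⟨j, f, hf⟩ := (Types.FilteredColimit.isColimit_eq_iff'
    (isColimitOfPreserves (forget TopCat) hc) x y).1 hxy
  exact (hG f).injective hf

theorem isOpenMap_ι_of_isOpenEmbedding_map (i : I) : IsOpenMap (c.ι.app i) := by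
  intro U hU
  refine (isOpen_iff_of_isColimit c hc _).2 fun j => ?_
  obtain ⟨k, hik, hjk⟩ := exists_ge_ge i j
  have hι {l : I} (h : l ≤ k) : ⇑(c.ι.app l) = c.ι.app k ∘ G.map (homOfLE h) :=
    funext fun x => (ConcreteCategory.congr_hom (c.w (homOfLE h)) x).symm
  rw [hι hik, hι hjk, Set.image_comp, Set.preimage_comp,
    Set.preimage_image_eq _ (injective_ι_of_isOpenEmbedding_map hG hc k)]
  exact ((hG _).isOpenMap U hU).preimage (G.map _).hom.continuous

theorem isOpenEmbedding_ι_of_isOpenEmbedding_map (i : I) : IsOpenEmbedding (c.ι.app i) :=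
  .of_continuous_injective_isOpenMap (c.ι.app i).hom.continuous
    (injective_ι_of_isOpenEmbedding_map hG hc i) (isOpenMap_ι_of_isOpenEmbedding_map hG hc i)

theorem exists_comp_ι_eq_of_compactSpace [Nonempty I] {X : TopCat.{u}} [CompactSpace X]
    (f : X ⟶ c.pt) : ∃ (i : I) (g : X ⟶ G.obj i), g ≫ c.ι.app i = f := by
  have hcover : Set.range f ⊆ ⋃ i, Set.range (c.ι.app i) := fun x _ =>
    Set.mem_iUnion.2 <|
      Types.jointly_surjective_of_isColimit (isColimitOfPreserves (forget TopCat) hc) x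
  have hdir : Directed (· ⊆ ·) fun i => (Set.range (c.ι.app i) : Set c.pt) :=
    directed_of_isDirected_le fun i j hij => by
      rintro _ ⟨x, rfl⟩
      exact ⟨G.map (homOfLE hij) x, ConcreteCategory.congr_hom (c.w _) x⟩
  obtain ⟨i, hi⟩ := (isCompact_range f.hom.continuous).elim_directed_cover _
    (fun i => (isOpenMap_ι_of_isOpenEmbedding_map hG hc i).isOpen_range) hcover hdir
  choose g hg using fun x => hi (Set.mem_range_self x)
  refine ⟨i, ofHom ⟨g, ?_⟩, ?_⟩
  · rw [(isOpenEmbedding_ι_of_isOpenEmbedding_map hG hc i).isInducing.continuous_iff]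
    exact f.hom.continuous.congr fun x => (hg x).symm
  · ext x
    exact hg x

theorem t0Space_of_isColimit [∀ i, T0Space (G.obj i)] : T0Space c.pt := by
  refine t0Space_iff_inseparable _ |>.2 fun x y hxy => ?_
  obtain ⟨k, a, b, rfl, rfl⟩ := jointly_surjective_of_isColimit₂ hc x y
  have hk := isOpenEmbedding_ι_of_isOpenEmbedding_map hG hc k
  rw [(hk.isInducing.inseparable_iff.1 hxy).eq]

theorem t1Space_of_isColimit [∀ i, T1Space (G.obj i)] : T1Space c.pt := by
  refine t1Space_iff_specializes_imp_eq.2 fun x y hxy => ?_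
  obtain ⟨k, a, b, rfl, rfl⟩ := jointly_surjective_of_isColimit₂ hc x y
  have hk := isOpenEmbedding_ι_of_isOpenEmbedding_map hG hc k
  rw [(hk.isInducing.specializes_iff.1 hxy).eq]

theorem t2Space_of_isColimit [∀ i, T2Space (G.obj i)] : T2Space c.pt := by
  refine t2Space_iff_disjoint_nhds.2 fun x y hxy => ?_
  obtain ⟨k, a, b, rfl, rfl⟩ := jointly_surjective_of_isColimit₂ hc x y
  have hk := isOpenEmbedding_ι_of_isOpenEmbedding_map hG hc k
  rw [← hk.map_nhds_eq, ← hk.map_nhds_eq, Filter.disjoint_map hk.injective]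
  exact disjoint_nhds_nhds.2 (ne_of_apply_ne _ hxy)

end DirectedColimit

section OpenCover

variable {X : TopCat.{u}} {D : Type*} [Preorder D] {V : D → Opens X}

def openSubspacesCocone (hV : Monotone V) : Cocone (hV.functor ⋙ Opens.toTopCat X) where
  pt := X
  ι := { app d := Opens.inclusion' (V d) }

theorem nonempty_isColimit_openSubspacesCocone [IsDirected D (· ≤ ·)] (hV : Monotone V)
    (hcov : IsOpenCover V) : Nonempty (IsColimit (openSubspacesCocone hV)) := by
  refine (nonempty_isColimit_iff_eq_coinduced _ ?_).2 ?_
  · refine Types.FilteredColimit.isColimitOf' _ _ (fun x => ?_)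
      (fun d x y h => ⟨d, 𝟙 d, Subtype.ext h⟩)
    obtain ⟨d, hd⟩ := hcov.exists_mem x
    exact ⟨d, ⟨x, hd⟩, rfl⟩
  · ext s
    rw [isOpen_iSup_iff]
    exact hcov.isOpen_iff_coe_preimage

end OpenCover

def IsClosedUnderOpenSubspaces (P : TopCat.{u} → Prop) : Prop :=
  ∀ (Y : TopCat.{u}) (U : Opens Y), P Y → P (of U)

def IsClosedUnderDirectedColimitsOfOpenEmbeddings (P : TopCat.{u} → Prop) : Prop :=
  ∀ (I : Type u) [PartialOrder I] [Nonempty I] [IsDirected I (· ≤ ·)] (G : I ⥤ TopCat.{u}),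
    (∀ {i j : I} (f : i ⟶ j), IsOpenEmbedding (G.map f)) → (∀ i, P (G.obj i)) →
    ∀ c : Cocone G, IsColimit c → P c.pt

section FullSubcategory

variable {P : TopCat.{u} → Prop}

theorem FinGenWrtOpenEmbeddingsIn.exists_eq_top (hP : IsClosedUnderOpenSubspaces P)
    {X : ObjectProperty.FullSubcategory P} (hX : FinGenWrtOpenEmbeddingsIn P X)
    {D : Type u} [PartialOrder D] [Nonempty D] [IsDirected D (· ≤ ·)] {V : D → Opens X.obj}
    (hV : Monotone V) (hcov : IsOpenCover V) : ∃ d, V d = ⊤ := by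
  let F : D ⥤ ObjectProperty.FullSubcategory P :=
    ObjectProperty.lift P (hV.functor ⋙ Opens.toTopCat X.obj) fun d => hP _ (V d) X.property
  let c : Cocone F :=
    { pt := X
      ι := { app d := ObjectProperty.homMk (Opens.inclusion' (V d)) } }
  have hc : IsColimit c := isColimitOfReflects (ObjectProperty.ι P)
    (nonempty_isColimit_openSubspacesCocone hV hcov).some
  have hF {d e : D} (f : d ⟶ e) : IsOpenEmbedding ((ObjectProperty.ι P).map (F.map f)) :=
    .of_comp _ (Opens.isOpenEmbedding (V e)) (Opens.isOpenEmbedding (V d))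
  obtain ⟨⟨d, g, hg⟩, -⟩ := hX D F hF c hc (𝟙 X)
  refine ⟨d, top_unique fun x _ => ?_⟩
  have hx : (g ≫ c.ι.app d).hom x = x := by rw [hg]; rfl
  rw [← hx]
  exact (g.hom x).2

theorem FinGenWrtOpenEmbeddingsIn.compactSpace (hP : IsClosedUnderOpenSubspaces P)
    {X : ObjectProperty.FullSubcategory P} (hX : FinGenWrtOpenEmbeddingsIn P X) :
    CompactSpace X.obj :=
  compactSpace_of_monotone_isOpenCover fun _ _ _ _ _ hV hcov => hX.exists_eq_top hP hV hcov

theorem finGenWrtOpenEmbeddingsIn_of_compactSpace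
    (hP : IsClosedUnderDirectedColimitsOfOpenEmbeddings P) (X : ObjectProperty.FullSubcategory P)
    [CompactSpace X.obj] : FinGenWrtOpenEmbeddingsIn P X := by
  intro I _ _ _ F hF c hc f
  -- The colimit in `TopCat` lies in the subcategory, so `c` is a colimit in `TopCat` as well.
  have : CreatesColimit F (ObjectProperty.ι P) := createsColimitOfFullyFaithfulOfIso
    ⟨colimit (F ⋙ ObjectProperty.ι P),
      hP I _ hF (fun i => (F.obj i).property) _ (colimit.isColimit _)⟩ (Iso.refl _)
  have hc' := isColimitOfPreserves (ObjectProperty.ι P) hc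
  refine ⟨?_, fun i g g' hg hg' => ?_⟩
  · obtain ⟨i, g, hg⟩ := exists_comp_ι_eq_of_compactSpace hF hc' f.hom
    exact ⟨i, ObjectProperty.homMk g, (ObjectProperty.ι P).map_injective hg⟩
  · have : Mono (c.ι.app i) := (ObjectProperty.ι P).mono_of_mono_map <|
      (mono_iff_injective _).2 (injective_ι_of_isOpenEmbedding_map hF hc' i)
    obtain rfl : g = g' := (cancel_mono (c.ι.app i)).1 (hg.trans hg'.symm)
    exact ⟨i, le_rfl, rfl⟩

theorem finGenWrtOpenEmbeddingsIn_iff_compactSpace (hP₁ : IsClosedUnderOpenSubspaces P)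
    (hP₂ : IsClosedUnderDirectedColimitsOfOpenEmbeddings P)
    (X : ObjectProperty.FullSubcategory P) :
    FinGenWrtOpenEmbeddingsIn P X ↔ CompactSpace X.obj :=
  ⟨fun hX => hX.compactSpace hP₁, fun _ => finGenWrtOpenEmbeddingsIn_of_compactSpace hP₂ X⟩

end FullSubcategory

end TopCat

/-- In each of the full subcategories `Haus` (Hausdorff spaces), `Top₁`
(T₁-spaces) and `Top₀` (T₀-spaces) of `Top`, a space is finitely generated with respect to
open embeddings if and only if it is compact. -/
theorem finGenWrtOpenEmbeddings_iff_compact_in_Haus_T1_T0 :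
    (∀ X : ObjectProperty.FullSubcategory (fun Y : TopCat.{u} => T2Space Y),
      TopCat.FinGenWrtOpenEmbeddingsIn _ X ↔ CompactSpace X.obj) ∧
    (∀ X : ObjectProperty.FullSubcategory (fun Y : TopCat.{u} => T1Space Y),
      TopCat.FinGenWrtOpenEmbeddingsIn _ X ↔ CompactSpace X.obj) ∧
    (∀ X : ObjectProperty.FullSubcategory (fun Y : TopCat.{u} => T0Space Y),
      TopCat.FinGenWrtOpenEmbeddingsIn _ X ↔ CompactSpace X.obj) :=
  ⟨TopCat.finGenWrtOpenEmbeddingsIn_iff_compactSpace (fun _ _ _ => inferInstance)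
      fun _ _ _ _ _ hG _ _ hc => TopCat.t2Space_of_isColimit hG hc,
    TopCat.finGenWrtOpenEmbeddingsIn_iff_compactSpace (fun _ _ _ => inferInstance)
      fun _ _ _ _ _ hG _ _ hc => TopCat.t1Space_of_isColimit hG hc,
    TopCat.finGenWrtOpenEmbeddingsIn_iff_compactSpace (fun _ _ _ => inferInstance)
      fun _ _ _ _ _ hG _ _ hc => TopCat.t0Space_of_isColimit hG hc⟩
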